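/- Assume: consistency for a ∈ {0,1,2}; trial exchangeability over A for a=0,1 with trial positivity for a=0,1; external exchangeability over A for a=0,2 with external positivity for a=0,2; positivity P(S=1|X=x)>0 and P(S=0|X=x)>0 for every x with P(X=x,S=2)>0; transportability of conditional difference effects from the trial to the third population for (1,0): E[Y¹−Y⁰|X=x,S=2]=E[Y¹−Y⁰|X=x,S=1]; and from the external source for (2,0): E[Y²−Y⁰|X=x,S=2]=E[Y²−Y⁰|X=x,S=0] (each for x with the relevant joint probabilities positive). Then E[Y¹ − Y² | S=2] equals φ* := Σ_x [(E[Y|X=x,S=1,A=1] − E[Y|X=x,S=1,A=0]) − (E[Y|X=x,S=0,A=2] − E[Y|X=x,S=0,A=0])] · P(X=x | S=2). -/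

import Mathlib

open Finset
open scoped Classical

noncomputable def pr {Ω : Type*} [Fintype Ω] (P : Ω → ℝ) (E : Ω → Prop) : ℝ :=
  ∑ ω, if E ω then P ω else 0

noncomputable def cexp {Ω : Type*} [Fintype Ω] (P : Ω → ℝ) (Y : Ω → ℝ) (E : Ω → Prop) : ℝ :=
  (∑ ω, if E ω then Y ω * P ω else 0) / pr P E

noncomputable def cpr {Ω : Type*} [Fintype Ω] (P : Ω → ℝ) (E F : Ω → Prop) : ℝ :=
  pr P (fun ω => E ω ∧ F ω) / pr P F

/-! Condition on `X` within `S = 2`. In each stratum `x`, write `Y¹ − Y²` as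
`(Y¹ − Y⁰) − (Y² − Y⁰)`; transportability moves the first difference to the trial stratum
`(x, S = 1)` and the second to the external stratum `(x, S = 0)`, where exchangeability and
consistency turn each potential-outcome mean into the observed mean of `Y` in the matching arm. -/

namespace FiniteProb

variable {Ω : Type*} [Fintype Ω] {P : Ω → ℝ}

lemma pr_nonneg (hP : ∀ ω, 0 ≤ P ω) (E : Ω → Prop) : 0 ≤ pr P E :=
  sum_nonneg fun ω _ => by split_ifs <;> simp [hP ω]

lemma eq_zero_of_pr_eq_zero (hP : ∀ ω, 0 ≤ P ω) {E : Ω → Prop} (h : pr P E = 0) {ω : Ω}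
    (hω : E ω) : P ω = 0 := by
  have hnn : ∀ i ∈ univ, (0 : ℝ) ≤ if E i then P i else 0 := fun i _ => by
    split_ifs <;> simp [hP i]
  simpa [hω] using (sum_eq_zero_iff_of_nonneg hnn).mp h ω (mem_univ ω)

lemma pr_pos_of_cpr_pos (hP : ∀ ω, 0 ≤ P ω) {E F : Ω → Prop} (h : 0 < cpr P E F) :
    0 < pr P (fun ω => F ω ∧ E ω) := by
  have hcomm : pr P (fun ω => E ω ∧ F ω) = pr P (fun ω => F ω ∧ E ω) :=
    congrArg (pr P) (funext fun _ => propext and_comm)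
  rw [cpr, hcomm] at h
  exact ((div_pos_iff.mp h).resolve_right fun h' => (pr_nonneg hP F).not_gt h'.2).1

lemma cexp_congr {f g : Ω → ℝ} {E : Ω → Prop} (h : ∀ ω, E ω → f ω = g ω) :
    cexp P f E = cexp P g E := by
  unfold cexp
  congr 1
  exact sum_congr rfl fun ω _ => by split_ifs with hω <;> simp [h ω, hω]

lemma cexp_sub (f g : Ω → ℝ) (E : Ω → Prop) :
    cexp P (fun ω => f ω - g ω) E = cexp P f E - cexp P g E := by
  unfold cexp
  rw [← sub_div, ← sum_sub_distrib]
  congr 1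
  exact sum_congr rfl fun ω _ => by split_ifs <;> ring

/-- On a null event both sides vanish: `cexp` divides by `pr P E = 0`. -/
lemma cexp_mul_pr (hP : ∀ ω, 0 ≤ P ω) (f : Ω → ℝ) (E : Ω → Prop) :
    cexp P f E * pr P E = ∑ ω, if E ω then f ω * P ω else 0 := by
  by_cases h : pr P E = 0
  · rw [h, mul_zero]
    refine (sum_eq_zero fun ω _ => ?_).symm
    split_ifs with hω
    · rw [eq_zero_of_pr_eq_zero hP h hω, mul_zero]
    · rfl
  · exact div_mul_cancel₀ _ h

lemma cexp_eq_sum_cexp_fiber {𝓧 : Type*} [Fintype 𝓧] (hP : ∀ ω, 0 ≤ P ω) (X : Ω → 𝓧)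
    (f : Ω → ℝ) (E : Ω → Prop) :
    cexp P f E = ∑ x, cexp P f (fun ω => X ω = x ∧ E ω) *
      (pr P (fun ω => X ω = x ∧ E ω) / pr P E) := by
  simp_rw [← mul_div_assoc, ← sum_div, cexp_mul_pr hP]
  unfold cexp
  rw [sum_comm]
  congr 1
  exact sum_congr rfl fun ω _ => by by_cases hE : E ω <;> simp [hE]

lemma cexp_eq_sum_cexp_pos_fiber {𝓧 : Type*} [Fintype 𝓧] (hP : ∀ ω, 0 ≤ P ω)
    (X : Ω → 𝓧) (f : Ω → ℝ) (E : Ω → Prop) :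
    cexp P f E = ∑ x ∈ univ.filter (fun x => 0 < pr P (fun ω => X ω = x ∧ E ω)),
      cexp P f (fun ω => X ω = x ∧ E ω) * (pr P (fun ω => X ω = x ∧ E ω) / pr P E) := by
  rw [sum_filter_of_ne, cexp_eq_sum_cexp_fiber hP X]
  intro x _ hx
  refine lt_of_le_of_ne (pr_nonneg hP _) fun h => hx ?_
  rw [← h, zero_div, mul_zero]

lemma cexp_sub_eq_of_exchangeable {Y Ya Yb : Ω → ℝ} {E Ga Gb : Ω → Prop}
    (hca : ∀ ω, Ga ω → Ya ω = Y ω) (hcb : ∀ ω, Gb ω → Yb ω = Y ω)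
    (hea : cexp P Ya E = cexp P Ya Ga) (heb : cexp P Yb E = cexp P Yb Gb) :
    cexp P (fun ω => Ya ω - Yb ω) E = cexp P Y Ga - cexp P Y Gb := by
  rw [cexp_sub, hea, heb, cexp_congr hca, cexp_congr hcb]

end FiniteProb

open FiniteProb in
theorem stmt16_general    {Ω 𝓧 : Type*} [Fintype Ω] [Fintype 𝓧]
    (P : Ω → ℝ) (hP : ∀ ω, 0 ≤ P ω)
    (X : Ω → 𝓧) (S : Ω → ℕ) (A : Ω → ℕ) (Y : Ω → ℝ)
    (Y0 Y1 Y2 : Ω → ℝ)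
    (hcons0 : ∀ ω, A ω = 0 → Y0 ω = Y ω)
    (hcons1 : ∀ ω, A ω = 1 → Y1 ω = Y ω)
    (hcons2 : ∀ ω, A ω = 2 → Y2 ω = Y ω)
    (hexch0 : ∀ x, 0 < pr P (fun ω => X ω = x ∧ S ω = 1) → cexp P Y0 (fun ω => X ω = x ∧ S ω = 1) = cexp P Y0 (fun ω => X ω = x ∧ S ω = 1 ∧ A ω = 0))
    (hexch1 : ∀ x, 0 < pr P (fun ω => X ω = x ∧ S ω = 1) → cexp P Y1 (fun ω => X ω = x ∧ S ω = 1) = cexp P Y1 (fun ω => X ω = x ∧ S ω = 1 ∧ A ω = 1))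
    (hexchext0 : ∀ x, 0 < pr P (fun ω => X ω = x ∧ S ω = 0) → cexp P Y0 (fun ω => X ω = x ∧ S ω = 0) = cexp P Y0 (fun ω => X ω = x ∧ S ω = 0 ∧ A ω = 0))
    (hexchext2 : ∀ x, 0 < pr P (fun ω => X ω = x ∧ S ω = 0) → cexp P Y2 (fun ω => X ω = x ∧ S ω = 0) = cexp P Y2 (fun ω => X ω = x ∧ S ω = 0 ∧ A ω = 2))
    (hpos1x : ∀ x, 0 < pr P (fun ω => X ω = x ∧ S ω = 2) → 0 < cpr P (fun ω => S ω = 1) (fun ω => X ω = x))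
    (hpos0x : ∀ x, 0 < pr P (fun ω => X ω = x ∧ S ω = 2) → 0 < cpr P (fun ω => S ω = 0) (fun ω => X ω = x))
    (htransdiff10 : ∀ x, 0 < pr P (fun ω => X ω = x ∧ S ω = 2) → 0 < pr P (fun ω => X ω = x ∧ S ω = 1) →
      cexp P (fun ω => Y1 ω - Y0 ω) (fun ω => X ω = x ∧ S ω = 2) =
      cexp P (fun ω => Y1 ω - Y0 ω) (fun ω => X ω = x ∧ S ω = 1))
    (htransdiff20 : ∀ x, 0 < pr P (fun ω => X ω = x ∧ S ω = 2) → 0 < pr P (fun ω => X ω = x ∧ S ω = 0) →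
      cexp P (fun ω => Y2 ω - Y0 ω) (fun ω => X ω = x ∧ S ω = 2) =
      cexp P (fun ω => Y2 ω - Y0 ω) (fun ω => X ω = x ∧ S ω = 0))
    : cexp P (fun ω => Y1 ω - Y2 ω) (fun ω => S ω = 2) =
      ∑ x ∈ univ.filter (fun x => 0 < pr P (fun ω => X ω = x ∧ S ω = 2)),
        ((cexp P Y (fun ω => X ω = x ∧ S ω = 1 ∧ A ω = 1) - cexp P Y (fun ω => X ω = x ∧ S ω = 1 ∧ A ω = 0)) -
          (cexp P Y (fun ω => X ω = x ∧ S ω = 0 ∧ A ω = 2) - cexp P Y (fun ω => X ω = x ∧ S ω = 0 ∧ A ω = 0))) *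
        (pr P (fun ω => X ω = x ∧ S ω = 2) / pr P (fun ω => S ω = 2)) := by
  rw [cexp_eq_sum_cexp_pos_fiber hP X]
  refine sum_congr rfl fun x hx => ?_
  have hx2 := (mem_filter.mp hx).2
  have hx1 := pr_pos_of_cpr_pos hP (hpos1x x hx2)
  have hx0 := pr_pos_of_cpr_pos hP (hpos0x x hx2)
  have h10 := (htransdiff10 x hx2 hx1).trans <| cexp_sub_eq_of_exchangeable
    (fun ω h => hcons1 ω h.2.2) (fun ω h => hcons0 ω h.2.2) (hexch1 x hx1) (hexch0 x hx1)
  have h20 := (htransdiff20 x hx2 hx0).trans <| cexp_sub_eq_of_exchangeable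
    (fun ω h => hcons2 ω h.2.2) (fun ω h => hcons0 ω h.2.2) (hexchext2 x hx0) (hexchext0 x hx0)
  rw [cexp_sub] at h10 h20 ⊢
  congr 1
  linarith

theorem stmt16    {Ω 𝓧 : Type*} [Fintype Ω] [Fintype 𝓧]
    (P : Ω → ℝ) (hP : ∀ ω, 0 ≤ P ω) (hPsum : ∑ ω, P ω = 1)
    (X : Ω → 𝓧) (S : Ω → ℕ) (A : Ω → ℕ) (Y : Ω → ℝ)
    (Y0 Y1 Y2 : Ω → ℝ)
    (hS2 : 0 < pr P (fun ω => S ω = 2))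
    (hcons0 : ∀ ω, A ω = 0 → Y0 ω = Y ω)
    (hcons1 : ∀ ω, A ω = 1 → Y1 ω = Y ω)
    (hcons2 : ∀ ω, A ω = 2 → Y2 ω = Y ω)
    (hexch0 : ∀ x, 0 < pr P (fun ω => X ω = x ∧ S ω = 1) → cexp P Y0 (fun ω => X ω = x ∧ S ω = 1) = cexp P Y0 (fun ω => X ω = x ∧ S ω = 1 ∧ A ω = 0))
    (hexch1 : ∀ x, 0 < pr P (fun ω => X ω = x ∧ S ω = 1) → cexp P Y1 (fun ω => X ω = x ∧ S ω = 1) = cexp P Y1 (fun ω => X ω = x ∧ S ω = 1 ∧ A ω = 1))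
    (hpos0 : ∀ x, 0 < pr P (fun ω => X ω = x ∧ S ω = 1) → 0 < cpr P (fun ω => A ω = 0) (fun ω => X ω = x ∧ S ω = 1))
    (hpos1 : ∀ x, 0 < pr P (fun ω => X ω = x ∧ S ω = 1) → 0 < cpr P (fun ω => A ω = 1) (fun ω => X ω = x ∧ S ω = 1))
    (hexchext0 : ∀ x, 0 < pr P (fun ω => X ω = x ∧ S ω = 0) → cexp P Y0 (fun ω => X ω = x ∧ S ω = 0) = cexp P Y0 (fun ω => X ω = x ∧ S ω = 0 ∧ A ω = 0))
    (hexchext2 : ∀ x, 0 < pr P (fun ω => X ω = x ∧ S ω = 0) → cexp P Y2 (fun ω => X ω = x ∧ S ω = 0) = cexp P Y2 (fun ω => X ω = x ∧ S ω = 0 ∧ A ω = 2))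
    (hposext0 : ∀ x, 0 < pr P (fun ω => X ω = x ∧ S ω = 0) → 0 < cpr P (fun ω => A ω = 0) (fun ω => X ω = x ∧ S ω = 0))
    (hposext2 : ∀ x, 0 < pr P (fun ω => X ω = x ∧ S ω = 0) → 0 < cpr P (fun ω => A ω = 2) (fun ω => X ω = x ∧ S ω = 0))
    (hpos1x : ∀ x, 0 < pr P (fun ω => X ω = x ∧ S ω = 2) → 0 < cpr P (fun ω => S ω = 1) (fun ω => X ω = x))
    (hpos0x : ∀ x, 0 < pr P (fun ω => X ω = x ∧ S ω = 2) → 0 < cpr P (fun ω => S ω = 0) (fun ω => X ω = x))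
    (htransdiff10 : ∀ x, 0 < pr P (fun ω => X ω = x ∧ S ω = 2) → 0 < pr P (fun ω => X ω = x ∧ S ω = 1) →
      cexp P (fun ω => Y1 ω - Y0 ω) (fun ω => X ω = x ∧ S ω = 2) =
      cexp P (fun ω => Y1 ω - Y0 ω) (fun ω => X ω = x ∧ S ω = 1))
    (htransdiff20 : ∀ x, 0 < pr P (fun ω => X ω = x ∧ S ω = 2) → 0 < pr P (fun ω => X ω = x ∧ S ω = 0) →
      cexp P (fun ω => Y2 ω - Y0 ω) (fun ω => X ω = x ∧ S ω = 2) =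
      cexp P (fun ω => Y2 ω - Y0 ω) (fun ω => X ω = x ∧ S ω = 0))
    : cexp P (fun ω => Y1 ω - Y2 ω) (fun ω => S ω = 2) =
      ∑ x ∈ univ.filter (fun x => 0 < pr P (fun ω => X ω = x ∧ S ω = 2)),
        ((cexp P Y (fun ω => X ω = x ∧ S ω = 1 ∧ A ω = 1) - cexp P Y (fun ω => X ω = x ∧ S ω = 1 ∧ A ω = 0)) -
          (cexp P Y (fun ω => X ω = x ∧ S ω = 0 ∧ A ω = 2) - cexp P Y (fun ω => X ω = x ∧ S ω = 0 ∧ A ω = 0))) *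
        (pr P (fun ω => X ω = x ∧ S ω = 2) / pr P (fun ω => S ω = 2)) :=
  stmt16_general P hP X S A Y Y0 Y1 Y2 hcons0 hcons1 hcons2 hexch0 hexch1 hexchext0 hexchext2 hpos1x
    hpos0x htransdiff10 htransdiff20
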